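/- arXiv:2504.00868 — 10 statements merged into one kernel-verified Lean document; each statement's English description precedes it below -/
import Mathlib

section
/- Let F be a field of characteristic ≠ 2 and J₂ the Jordan algebra of a nondegenerate symmetric bilinear form on a 2-dimensional space. (i) If the element a = λ·1 + α·x + β·y of J₂ is R-invertible, i.e. the right multiplication operator R_a : z ↦ z·a is bijective, then λ ≠ 0. (ii) The element a = 1 + α·x + β·y is R-invertible if and only if 1 − 2αβ ≠ 0. -/
open Module

section Defs

variable (F : Type*) [Field F]

/-- `I` is a (two-sided) ideal of the algebra `(A, mul)`. -/
def IsIdeal {A : Type*} [AddCommGroup A] [Module F A]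
    (mul : A → A → A) (I : Submodule F A) : Prop :=
  ∀ a : A, ∀ u ∈ I, mul a u ∈ I ∧ mul u a ∈ I

/-- The (not necessarily associative or unital) algebra `(A, mul)` is simple:
its multiplication is nonzero and its only ideals are `⊥` and `⊤`. -/
def IsSimpleAlg {A : Type*} [AddCommGroup A] [Module F A]
    (mul : A → A → A) : Prop :=
  (∃ u v : A, mul u v ≠ 0) ∧
  ∀ I : Submodule F A, IsIdeal F mul I → I = ⊥ ∨ I = ⊤

/-- The algebra `(A, mul)` has nil-rank `k`: there are `k` linearly independent
nil-elements of index 2, but no `k + 1` such elements. -/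
def HasNilRank {A : Type*} [AddCommGroup A] [Module F A]
    (mul : A → A → A) (k : ℕ) : Prop :=
  (∃ v : Fin k → A, LinearIndependent F v ∧ ∀ i, mul (v i) (v i) = 0) ∧
  ∀ v : Fin (k + 1) → A, LinearIndependent F v → ∃ i, mul (v i) (v i) ≠ 0

/-- The algebras `(A, mulA)` and `(B, mulB)` are isomorphic. -/
def AlgIso {A B : Type*} [AddCommGroup A] [Module F A] [AddCommGroup B] [Module F B]
    (mulA : A → A → A) (mulB : B → B → B) : Prop :=
  ∃ φ : A ≃ₗ[F] B, ∀ u v : A, φ (mulA u v) = mulB (φ u) (φ v)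

/-- The algebras `(A, mulA)` and `(B, mulB)` are isotopic. -/
def Isotopic {A B : Type*} [AddCommGroup A] [Module F A] [AddCommGroup B] [Module F B]
    (mulA : A → A → A) (mulB : B → B → B) : Prop :=
  ∃ φ ψ ξ : A ≃ₗ[F] B, ∀ u v : A, mulB (φ u) (ψ v) = ξ (mulA u v)

/-- `(e, x, y)` is a canonical basis of `A` realizing the unital commutative algebra
`C(α, β, γ)`: `e` is a multiplicative identity, `x² = y² = 0`,
and `xy = yx = α·1 + β·x + γ·y`. (`C(1,0,0)` is the Jordan algebra `J₂`.) -/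
def IsCAlg {A : Type*} [AddCommGroup A] [Module F A]
    (m : A →ₗ[F] A →ₗ[F] A) (α β γ : F) (e x y : A) : Prop :=
  LinearIndependent F ![e, x, y] ∧
  Submodule.span F {e, x, y} = ⊤ ∧
  (∀ u, m e u = u) ∧ (∀ u, m u e = u) ∧
  m x x = 0 ∧ m y y = 0 ∧
  m x y = α • e + β • x + γ • y ∧ m y x = α • e + β • x + γ • y

end Defs


/-! In the basis `(1, x, y)` of `J₂`, right multiplication by `a = λ·1 + α·x + β·y` has matrix
`!![λ, β, α; α, λ, 0; β, 0, λ]`, of determinant `λ (λ² - 2αβ)`; so `R_a` is bijective exactly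
when this determinant is nonzero, which gives both (i) and, at `λ = 1`, (ii). -/

namespace IsCAlg

variable {F : Type*} [Field F] {A : Type*} [AddCommGroup A] [Module F A]
  {m : A →ₗ[F] A →ₗ[F] A} {e x y : A}

section Basis

variable {α β γ : F} (hJ : IsCAlg F m α β γ e x y)

noncomputable def basis : Basis (Fin 3) F A :=
  Basis.mk hJ.1 (by rw [Matrix.range_cons, Matrix.range_cons_cons_empty]; exact hJ.2.1.ge)

theorem basis_apply (i : Fin 3) : hJ.basis i = ![e, x, y] i :=
  Basis.mk_apply _ _ _

theorem basis_repr (c u v : F) : ⇑(hJ.basis.repr (c • e + u • x + v • y)) = ![c, u, v] := by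
  convert hJ.basis.repr_sum_self ![c, u, v]
  simp [Fin.sum_univ_three, basis_apply, add_assoc]

end Basis

variable (hJ : IsCAlg F m 1 0 0 e x y)
include hJ

theorem toMatrix_flip (lam α β : F) :
    LinearMap.toMatrix hJ.basis hJ.basis (m.flip (lam • e + α • x + β • y)) =
      !![lam, β, α; α, lam, 0; β, 0, lam] := by
  obtain ⟨-, -, he, he', hxx, hyy, hxy, hyx⟩ := id hJ
  have hx : m x (lam • e + α • x + β • y) = β • e + lam • x + (0 : F) • y := by
    simp only [map_add, map_smul, he', hxx, hxy]
    module
  have hy : m y (lam • e + α • x + β • y) = α • e + (0 : F) • x + lam • y := by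
    simp only [map_add, map_smul, he', hyy, hyx]
    module
  ext i j
  fin_cases j <;>
  simp only [LinearMap.toMatrix_apply, basis_apply, LinearMap.flip_apply, Fin.zero_eta, Fin.mk_one,
    Fin.reduceFinMk, Matrix.cons_val, he, hx, hy, basis_repr] <;>
  fin_cases i <;> rfl

theorem det_flip (lam α β : F) :
    LinearMap.det (m.flip (lam • e + α • x + β • y)) = lam * (lam ^ 2 - 2 * α * β) := by
  rw [← LinearMap.det_toMatrix hJ.basis, toMatrix_flip hJ]
  simp [Matrix.det_fin_three]
  ring

theorem bijective_flip_iff (lam α β : F) :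
    Function.Bijective (m.flip (lam • e + α • x + β • y)) ↔ lam * (lam ^ 2 - 2 * α * β) ≠ 0 := by
  have := Module.Free.of_basis hJ.basis
  have := Module.Finite.of_basis hJ.basis
  rw [← Module.End.isUnit_iff, LinearMap.isUnit_iff_isUnit_det, det_flip hJ, isUnit_iff_ne_zero]

end IsCAlg

theorem stmt1_general {F : Type*} [Field F]
    {A : Type*} [AddCommGroup A] [Module F A]
    (m : A →ₗ[F] A →ₗ[F] A) (e x y : A)
    (hJ : IsCAlg F m 1 0 0 e x y) :
    (∀ lam α β : F,
      Function.Bijective (fun z : A => m z (lam • e + α • x + β • y)) → lam ≠ 0) ∧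
    (∀ α β : F,
      Function.Bijective (fun z : A => m z (e + α • x + β • y)) ↔ 1 - 2 * α * β ≠ 0) := by
  refine ⟨fun lam α β h => left_ne_zero_of_mul ((hJ.bijective_flip_iff lam α β).1 h),
    fun α β => ?_⟩
  have h := hJ.bijective_flip_iff 1 α β
  rw [one_smul, one_pow, one_mul] at h
  exact h

/-- In the Jordan algebra `J₂ = C(1,0,0)` over a field of
characteristic `≠ 2`:
(i) if `a = λ•1 + α•x + β•y` is `R`-invertible (the right multiplication operator
`z ↦ z·a` is bijective), then `λ ≠ 0`;
(ii) `a = 1 + α•x + β•y` is `R`-invertible iff `1 - 2αβ ≠ 0`. -/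
theorem stmt1 {F : Type*} [Field F] (hchar : (2 : F) ≠ 0)
    {A : Type*} [AddCommGroup A] [Module F A]
    (m : A →ₗ[F] A →ₗ[F] A) (e x y : A)
    (hJ : IsCAlg F m 1 0 0 e x y) :
    (∀ lam α β : F,
      Function.Bijective (fun z : A => m z (lam • e + α • x + β • y)) → lam ≠ 0) ∧
    (∀ α β : F,
      Function.Bijective (fun z : A => m z (e + α • x + β • y)) ↔ 1 - 2 * α * β ≠ 0) :=
  stmt1_general m e x y hJ
end

section
/- Let F be a field of characteristic ≠ 2. Every nil-element of index 2 of the algebra J₂ lies in the set Fx ∪ Fy (scalar multiples of x or of y). Consequently, the nil-rank of J₂ equals 2. -/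
/-! Writing `u = a e + b x + c y`, one finds `u² = (a² + 2bc) e + 2ab x + 2ac y`; since `2 ≠ 0`,
`u² = 0` forces `a³ = 0` and then `bc = 0`, so `u ∈ Fx ∪ Fy`. Of three linearly independent
nil-elements, two would then lie on the same line, which is impossible. -/

open Module

section LinearIndependent

variable {F A ι : Type*} [Field F] [AddCommGroup A] [Module F A] {v : ι → A}

theorem LinearIndependent.eq_of_mem_span_singleton (hv : LinearIndependent F v) {w : A}
    {i j : ι} (hi : v i ∈ F ∙ w) (hj : v j ∈ F ∙ w) : i = j := by
  by_contra hij
  obtain ⟨a, ha⟩ := Submodule.mem_span_singleton.mp hi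
  obtain ⟨b, hb⟩ := Submodule.mem_span_singleton.mp hj
  have hb0 : b ≠ 0 := by
    rintro rfl
    exact hv.ne_zero j (by simpa using hb.symm)
  have hmem : v i ∈ Submodule.span F (v '' {j}) := by
    rw [Set.image_singleton, Submodule.mem_span_singleton, ← ha, ← hb]
    exact ⟨a / b, by rw [smul_smul, div_mul_cancel₀ a hb0]⟩
  exact hv.notMem_span_image (s := {j}) (hij ∘ Set.mem_singleton_iff.mp) hmem

theorem LinearIndependent.not_forall_mem_span_singleton_or [Fintype ι]
    (hv : LinearIndependent F v) (hcard : 2 < Fintype.card ι) (x y : A) :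
    ¬ ∀ i, v i ∈ F ∙ x ∨ v i ∈ F ∙ y := by
  classical
  intro h
  obtain ⟨i, j, hij, hsame⟩ :=
    Fintype.exists_ne_map_eq_of_card_lt (fun i => decide (v i ∈ F ∙ x)) (by simpa using hcard)
  by_cases hx : v i ∈ F ∙ x
  · have hjx : v j ∈ F ∙ x := by simpa [hx] using hsame
    exact hij (hv.eq_of_mem_span_singleton hx hjx)
  · have hjx : v j ∉ F ∙ x := by simpa [hx] using hsame
    exact hij (hv.eq_of_mem_span_singleton ((h i).resolve_left hx) ((h j).resolve_left hjx))

end LinearIndependent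

theorem eq_zero_and_or_of_sq_add_two_mul_eq_zero {F : Type*} [Field F] (hchar : (2 : F) ≠ 0)
    {a b c : F} (h₁ : a * a + 2 * (b * c) = 0) (h₂ : 2 * (a * b) = 0) (h₃ : 2 * (a * c) = 0) :
    a = 0 ∧ (b = 0 ∨ c = 0) := by
  have hab : a * b = 0 := (mul_eq_zero.mp h₂).resolve_left hchar
  have hac : a * c = 0 := (mul_eq_zero.mp h₃).resolve_left hchar
  have ha : a = 0 := by
    have hcube : a ^ 3 = 0 := by linear_combination a * h₁ - 2 * b * hac
    exact pow_eq_zero_iff (by norm_num) |>.mp hcube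
  subst ha
  refine ⟨rfl, mul_eq_zero.mp ?_⟩
  exact (mul_eq_zero.mp (by simpa using h₁)).resolve_left hchar

namespace IsCAlg

variable {F A : Type*} [Field F] [AddCommGroup A] [Module F A]
  {m : A →ₗ[F] A →ₗ[F] A} {α β γ : F} {e x y : A}

theorem exists_coords (hC : IsCAlg F m α β γ e x y) (u : A) :
    ∃ a b c : F, u = a • e + b • x + c • y := by
  have hu : u ∈ Submodule.span F {e, x, y} := hC.2.1 ▸ Submodule.mem_top
  obtain ⟨a, _, hz, rfl⟩ := Submodule.mem_span_insert.mp hu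
  obtain ⟨b, _, hw, rfl⟩ := Submodule.mem_span_insert.mp hz
  obtain ⟨c, rfl⟩ := Submodule.mem_span_singleton.mp hw
  exact ⟨a, b, c, by rw [add_assoc]⟩

theorem coords_eq_zero (hC : IsCAlg F m α β γ e x y) {a b c : F}
    (h : a • e + b • x + c • y = 0) : a = 0 ∧ b = 0 ∧ c = 0 := by
  have h0 := Fintype.linearIndependent_iff.mp hC.1 ![a, b, c]
    (by simpa [Fin.sum_univ_three] using h)
  exact ⟨h0 0, h0 1, h0 2⟩

theorem mul_self_coords (hC : IsCAlg F m α β γ e x y) (a b c : F) :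
    m (a • e + b • x + c • y) (a • e + b • x + c • y) =
      (a * a + 2 * (b * c) * α) • e + (2 * (a * b) + 2 * (b * c) * β) • x +
        (2 * (a * c) + 2 * (b * c) * γ) • y := by
  obtain ⟨-, -, he, he', hxx, hyy, hxy, hyx⟩ := hC
  simp only [map_add, map_smul, LinearMap.add_apply, LinearMap.smul_apply,
    he, he', hxx, hyy, hxy, hyx, smul_zero]
  module

theorem mem_span_singleton_or_of_mul_self_eq_zero (hchar : (2 : F) ≠ 0)
    (hJ : IsCAlg F m 1 0 0 e x y) {u : A} (hu : m u u = 0) : u ∈ F ∙ x ∨ u ∈ F ∙ y := by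
  obtain ⟨a, b, c, rfl⟩ := hJ.exists_coords u
  rw [hJ.mul_self_coords] at hu
  obtain ⟨h₁, h₂, h₃⟩ := hJ.coords_eq_zero hu
  simp only [mul_one, mul_zero, add_zero] at h₁ h₂ h₃
  obtain ⟨rfl, hb | hc⟩ := eq_zero_and_or_of_sq_add_two_mul_eq_zero hchar h₁ h₂ h₃
  · exact .inr (Submodule.mem_span_singleton.mpr ⟨c, by simp [hb]⟩)
  · exact .inl (Submodule.mem_span_singleton.mpr ⟨b, by simp [hc]⟩)

end IsCAlg

/-- Over a field of characteristic `≠ 2`, every nil-element of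
index 2 of `J₂ = C(1,0,0)` lies in `Fx ∪ Fy`; consequently the nil-rank of `J₂`
equals `2`. -/
theorem stmt2 {F : Type*} [Field F] (hchar : (2 : F) ≠ 0)
    {A : Type*} [AddCommGroup A] [Module F A]
    (m : A →ₗ[F] A →ₗ[F] A) (e x y : A)
    (hJ : IsCAlg F m 1 0 0 e x y) :
    (∀ u : A, u ≠ 0 → m u u = 0 → (∃ c : F, u = c • x) ∨ (∃ c : F, u = c • y)) ∧
    HasNilRank F (fun u v : A => m u v) 2 := by
  have hnil : ∀ u, m u u = 0 → u ∈ F ∙ x ∨ u ∈ F ∙ y :=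
    fun u => hJ.mem_span_singleton_or_of_mul_self_eq_zero hchar
  refine ⟨fun u _ hu => ?_, ⟨![x, y], ?_, ?_⟩, fun v hv => ?_⟩
  · simpa only [Submodule.mem_span_singleton, eq_comm (a := u)] using hnil u hu
  · exact hJ.1.comp Fin.succ (Fin.succ_injective 2)
  · exact Fin.forall_fin_two.mpr ⟨hJ.2.2.2.2.1, hJ.2.2.2.2.2.1⟩
  · by_contra hsq
    push Not at hsq
    exact hv.not_forall_mem_span_singleton_or (by simp) x y fun i => hnil (v i) (hsq i)
end

section
/- Let F be a field. The algebra C₂ over F has no multiplicative identity element. -/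
/-! Right multiplication by `a` swaps `a` and `b` and fixes `c`, so it is an involution.
An identity `e` would satisfy `e a = a = (a a) a`, hence `e = a a = b`; but `b b = 0 ≠ b`. -/

open Module

theorem flip_comp_flip_eq_id_of_span {F : Type*} [Field F] {A : Type*} [AddCommGroup A]
    [Module F A] (m : A →ₗ[F] A →ₗ[F] A) {a b c : A}
    (hspan : Submodule.span F {a, b, c} = ⊤)
    (haa : m a a = b) (hba : m b a = a) (hca : m c a = c) :
    m.flip a ∘ₗ m.flip a = LinearMap.id := by
  refine LinearMap.ext_on hspan ?_
  rintro x (rfl | rfl | rfl) <;> simp [haa, hba, hca]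

theorem stmt3_general {F : Type*} [Field F] {A : Type*} [AddCommGroup A] [Module F A]
    (m : A →ₗ[F] A →ₗ[F] A) (a b c : A)
    (hbasis : LinearIndependent F ![a, b, c])
    (hspan : Submodule.span F {a, b, c} = ⊤)
    (haa : m a a = b) (hba : m b a = a)
    (hca : m c a = c)
    (hbb : m b b = 0) :
    ¬ ∃ e : A, ∀ u : A, m e u = u ∧ m u e = u := by
  rintro ⟨e, he⟩
  have hinv := flip_comp_flip_eq_id_of_span m hspan haa hba hca
  have he_eq : e = b :=
    calc e = m.flip a (m.flip a e) := (LinearMap.congr_fun hinv e).symm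
      _ = b := by simp [(he a).1, haa]
  have hb : b = 0 := by simpa [he_eq, hbb] using ((he b).1).symm
  exact hbasis.ne_zero 1 (by simpa using hb)

/-- The commutative algebra `C₂` with basis `(a, b, c)` and
multiplication `a² = b`, `ab = ba = a`, `ac = ca = c`, `b² = c² = 0`, `bc = cb = b`
has no multiplicative identity element. -/
theorem stmt3 {F : Type*} [Field F] {A : Type*} [AddCommGroup A] [Module F A]
    (m : A →ₗ[F] A →ₗ[F] A) (a b c : A)
    (hbasis : LinearIndependent F ![a, b, c])
    (hspan : Submodule.span F {a, b, c} = ⊤)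
    (haa : m a a = b) (hab : m a b = a) (hba : m b a = a)
    (hac : m a c = c) (hca : m c a = c)
    (hbb : m b b = 0) (hcc : m c c = 0)
    (hbc : m b c = b) (hcb : m c b = b) :
    ¬ ∃ e : A, ∀ u : A, m e u = u ∧ m u e = u :=
  stmt3_general m a b c hbasis hspan haa hba hca hbb
end

section
/- Let F be a field of characteristic ≠ 2. Every nil-element of index 2 of the algebra C₂ lies in the set Fb ∪ Fc (scalar multiples of b or of c). Consequently, the nil-rank of C₂ equals 2. -/
open Module

/-! Writing `u = x a + y b + z c`, one computes `u² = 2xy a + (x² + 2yz) b + 2xz c`.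
If `u² = 0` and `2 ≠ 0`, then `xy = 0` and `x² + 2yz = 0`, so `x³ = x (x² + 2yz) - 2z (xy) = 0`;
hence `x = 0` and `yz = 0`, i.e. `u ∈ F b ∪ F c`. All nil-elements thus lie in the plane spanned
by `b` and `c`, which contains no three independent vectors, while `b` and `c` are themselves
independent nil-elements. -/

theorem LinearIndependent.eq_zero_of_smul_add_smul_add_smul_eq_zero {R M : Type*} [Ring R]
    [AddCommGroup M] [Module R M] {x y z : M} (h : LinearIndependent R ![x, y, z])
    {r s t : R} (hrst : r • x + s • y + t • z = 0) : r = 0 ∧ s = 0 ∧ t = 0 := by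
  have := Fintype.linearIndependent_iff.mp h ![r, s, t]
    (by simpa [Fin.sum_univ_three, add_assoc] using hrst)
  exact ⟨this 0, this 1, this 2⟩

theorem LinearIndependent.card_le_two_of_forall_mem_span_pair {K V ι : Type*} [DivisionRing K]
    [AddCommGroup V] [Module K V] [Fintype ι] {v : ι → V} (hv : LinearIndependent K v)
    {b c : V} (h : ∀ i, v i ∈ Submodule.span K {b, c}) : Fintype.card ι ≤ 2 := by
  classical
  have := linearIndependent_le_span' v hv {b, c} (by rintro _ ⟨i, rfl⟩; exact h i)
  rw [Cardinal.mk_fintype, Nat.cast_le] at this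
  exact this.trans (by simpa using Finset.card_le_two)

theorem hasNilRank_two_of_forall_mem_span_pair {F A : Type*} [Field F] [AddCommGroup A]
    [Module F A] {mul : A → A → A} {b c : A} (hbc : LinearIndependent F ![b, c])
    (hb : mul b b = 0) (hc : mul c c = 0)
    (hnil : ∀ u, mul u u = 0 → u ∈ Submodule.span F {b, c}) : HasNilRank F mul 2 := by
  refine ⟨⟨![b, c], hbc, fun i => by fin_cases i <;> assumption⟩, fun v hv => ?_⟩
  by_contra! hsq
  simpa using hv.card_le_two_of_forall_mem_span_pair fun i => hnil _ (hsq i)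

structure IsC2MulTable {F A : Type*} [Field F] [AddCommGroup A] [Module F A]
    (m : A →ₗ[F] A →ₗ[F] A) (a b c : A) : Prop where
  aa : m a a = b
  ab : m a b = a
  ba : m b a = a
  ac : m a c = c
  ca : m c a = c
  bb : m b b = 0
  cc : m c c = 0
  bc : m b c = b
  cb : m c b = b

namespace IsC2MulTable

variable {F A : Type*} [Field F] [AddCommGroup A] [Module F A] {m : A →ₗ[F] A →ₗ[F] A}
  {a b c : A}

theorem apply_self (h : IsC2MulTable m a b c) (x y z : F) :
    m (x • a + y • b + z • c) (x • a + y • b + z • c) =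
      (2 * (x * y)) • a + (x * x + 2 * (y * z)) • b + (2 * (x * z)) • c := by
  simp only [map_add, map_smul, LinearMap.add_apply, LinearMap.smul_apply, h.aa, h.ab, h.ba,
    h.ac, h.ca, h.bb, h.cc, h.bc, h.cb, smul_zero]
  module

theorem exists_eq_smul_of_apply_self_eq_zero (h : IsC2MulTable m a b c) (hchar : (2 : F) ≠ 0)
    (hbasis : LinearIndependent F ![a, b, c]) (hspan : Submodule.span F {a, b, c} = ⊤) {u : A}
    (hu : m u u = 0) : (∃ t : F, u = t • b) ∨ (∃ t : F, u = t • c) := by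
  obtain ⟨x, y, z, rfl⟩ := Submodule.mem_span_triple.mp (hspan ▸ Submodule.mem_top : u ∈ _)
  rw [h.apply_self] at hu
  obtain ⟨hxy, hxyz, -⟩ := hbasis.eq_zero_of_smul_add_smul_add_smul_eq_zero hu
  replace hxy : x * y = 0 := (mul_eq_zero.mp hxy).resolve_left hchar
  obtain rfl : x = 0 := pow_eq_zero_iff (n := 3) (by norm_num) |>.mp <| by
    linear_combination x * hxyz - 2 * z * hxy
  have hyz : y * z = 0 := (mul_eq_zero.mp (by simpa using hxyz)).resolve_left hchar
  rcases mul_eq_zero.mp hyz with rfl | rfl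
  · exact .inr ⟨z, by simp⟩
  · exact .inl ⟨y, by simp⟩

end IsC2MulTable

/-- Over a field of characteristic `≠ 2`, every nil-element of
index 2 of the algebra `C₂` lies in `Fb ∪ Fc`; consequently the nil-rank of `C₂`
equals `2`. -/
theorem stmt4 {F : Type*} [Field F] (hchar : (2 : F) ≠ 0)
    {A : Type*} [AddCommGroup A] [Module F A]
    (m : A →ₗ[F] A →ₗ[F] A) (a b c : A)
    (hbasis : LinearIndependent F ![a, b, c])
    (hspan : Submodule.span F {a, b, c} = ⊤)
    (haa : m a a = b) (hab : m a b = a) (hba : m b a = a)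
    (hac : m a c = c) (hca : m c a = c)
    (hbb : m b b = 0) (hcc : m c c = 0)
    (hbc : m b c = b) (hcb : m c b = b) :
    (∀ u : A, u ≠ 0 → m u u = 0 → (∃ t : F, u = t • b) ∨ (∃ t : F, u = t • c)) ∧
    HasNilRank F (fun u v : A => m u v) 2 := by
  have hC2 : IsC2MulTable m a b c := ⟨haa, hab, hba, hac, hca, hbb, hcc, hbc, hcb⟩
  have hnil {u : A} (hu : m u u = 0) :=
    hC2.exists_eq_smul_of_apply_self_eq_zero hchar hbasis hspan hu
  have hbc_indep : LinearIndependent F ![b, c] := by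
    refine LinearIndependent.pair_iff.mpr fun s t hst => ?_
    exact (hbasis.eq_zero_of_smul_add_smul_add_smul_eq_zero (r := 0) (by simpa using hst)).2
  refine ⟨fun u _ hu => hnil hu, hasNilRank_two_of_forall_mem_span_pair hbc_indep hbb hcc ?_⟩
  intro u hu
  rcases hnil hu with ⟨t, rfl⟩ | ⟨t, rfl⟩ <;>
    exact Submodule.smul_mem _ _ (Submodule.subset_span (by simp))
end

section
/- Let F be a field of characteristic ≠ 2. Let R_a be the right multiplication operator by the basis element a of C₂ (which is invertible, with R_a² = id). The principal isotope C₂^{(R_a, R_a)}, with multiplication u ∗ v = (u·a)·(v·a), is isomorphic to J₂. In particular, the algebras C₂ and J₂ are isotopic. -/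
open Module

/-! `R_a` swaps `a` and `b` and fixes `c`, so `R_a² = id`. In the isotope `u ∗ v = (u·a)·(v·a)`
the element `b` is an identity, `a ∗ a = c ∗ c = 0` and `a ∗ c = c ∗ a = b`, so `a ↦ x, b ↦ 1, c ↦ y`
is an isomorphism onto `J₂`. Precomposing an isomorphism out of a principal isotope `A^{(f,g)}`
with `f⁻¹, g⁻¹` gives an isotopy out of `A`. -/

section Triples

variable {F A : Type*} [Field F] [AddCommGroup A] [Module F A] {a b c : A}

theorem LinearMap.ext_of_span_triple {M : Type*} [AddCommGroup M] [Module F M]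
    (hspan : Submodule.span F {a, b, c} = ⊤) {f g : A →ₗ[F] M}
    (ha : f a = g a) (hb : f b = g b) (hc : f c = g c) : f = g :=
  LinearMap.ext_on hspan (by rintro _ (rfl | rfl | rfl) <;> assumption)

theorem LinearIndependent.swap_first_two (h : LinearIndependent F ![a, b, c]) :
    LinearIndependent F ![b, a, c] := by
  convert h.comp (Equiv.swap 0 1) (Equiv.injective _) using 1
  funext i
  fin_cases i <;> rfl

theorem exists_linearEquiv_map_triple {B : Type*} [AddCommGroup B] [Module F B] {a' b' c' : B}
    (hA : LinearIndependent F ![a, b, c]) (hA' : Submodule.span F {a, b, c} = ⊤)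
    (hB : LinearIndependent F ![a', b', c']) (hB' : Submodule.span F {a', b', c'} = ⊤) :
    ∃ φ : A ≃ₗ[F] B, φ a = a' ∧ φ b = b' ∧ φ c = c' := by
  let bA : Basis (Fin 3) F A := .mk hA (by
    simp only [Matrix.range_cons, Matrix.range_empty, Set.union_empty, Set.singleton_union, hA',
      le_refl])
  let bB : Basis (Fin 3) F B := .mk hB (by
    simp only [Matrix.range_cons, Matrix.range_empty, Set.union_empty, Set.singleton_union, hB',
      le_refl])
  refine ⟨bA.equiv bB (Equiv.refl _), ?_, ?_, ?_⟩
  · simpa [bA, bB] using bA.equiv_apply 0 bB (Equiv.refl _)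
  · simpa [bA, bB] using bA.equiv_apply 1 bB (Equiv.refl _)
  · simpa [bA, bB] using bA.equiv_apply 2 bB (Equiv.refl _)

end Triples

theorem Isotopic.of_algIso_principalIsotope {F A B : Type*} [Field F]
    [AddCommGroup A] [Module F A] [AddCommGroup B] [Module F B]
    (mulA : A → A → A) (mulB : B → B → B) (f g : A ≃ₗ[F] A)
    (h : AlgIso F (fun u v => mulA (f u) (g v)) mulB) : Isotopic F mulA mulB := by
  obtain ⟨φ, hφ⟩ := h
  refine ⟨f.symm.trans φ, g.symm.trans φ, φ, fun u v => ?_⟩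
  simpa using (hφ (f.symm u) (g.symm v)).symm

section C₂

variable {F A : Type*} [Field F] [AddCommGroup A] [Module F A]
  {m : A →ₗ[F] A →ₗ[F] A} {a b c : A}

theorem C₂.rightMul_involutive (hspan : Submodule.span F {a, b, c} = ⊤)
    (haa : m a a = b) (hba : m b a = a) (hca : m c a = c) :
    Function.Involutive (fun u => m u a) := by
  have h : (m.flip a).comp (m.flip a) = LinearMap.id :=
    LinearMap.ext_of_span_triple hspan (by simp [haa, hba]) (by simp [hba, haa]) (by simp [hca])
  exact fun u => LinearMap.congr_fun h u

theorem C₂.map_isotope_mul {B : Type*} [AddCommGroup B] [Module F B]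
    {m' : B →ₗ[F] B →ₗ[F] B} {e x y : B} (φ : A →ₗ[F] B)
    (hspan : Submodule.span F {a, b, c} = ⊤)
    (haa : m a a = b) (hab : m a b = a) (hba : m b a = a)
    (hac : m a c = c) (hca : m c a = c)
    (hbb : m b b = 0) (hcc : m c c = 0)
    (hbc : m b c = b) (hcb : m c b = b)
    (he_left : ∀ u, m' e u = u) (he_right : ∀ u, m' u e = u)
    (hxx : m' x x = 0) (hyy : m' y y = 0) (hxy : m' x y = e) (hyx : m' y x = e)
    (hφa : φ a = x) (hφb : φ b = e) (hφc : φ c = y) (u v : A) :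
    φ (m (m u a) (m v a)) = m' (φ u) (φ v) := by
  have h : ((m.compl₁₂ (m.flip a) (m.flip a)).compr₂ φ) = m'.compl₁₂ φ φ := by
    refine LinearMap.ext_of_span_triple hspan ?_ ?_ ?_ <;>
      refine LinearMap.ext_of_span_triple hspan ?_ ?_ ?_ <;>
      simp [haa, hab, hba, hac, hca, hbb, hcc, hbc, hcb, hφa, hφb, hφc,
        he_left, he_right, hxx, hyy, hxy, hyx]
  exact LinearMap.congr_fun (LinearMap.congr_fun h u) v

end C₂

theorem stmt5_general {F : Type*} [Field F]
    {A : Type*} [AddCommGroup A] [Module F A]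
    (m : A →ₗ[F] A →ₗ[F] A) (a b c : A)
    (hbasis : LinearIndependent F ![a, b, c])
    (hspan : Submodule.span F {a, b, c} = ⊤)
    (haa : m a a = b) (hab : m a b = a) (hba : m b a = a)
    (hac : m a c = c) (hca : m c a = c)
    (hbb : m b b = 0) (hcc : m c c = 0)
    (hbc : m b c = b) (hcb : m c b = b)
    {B : Type*} [AddCommGroup B] [Module F B]
    (m' : B →ₗ[F] B →ₗ[F] B) (e' x' y' : B)
    (hJ : IsCAlg F m' 1 0 0 e' x' y') :
    (∀ u : A, m (m u a) a = u) ∧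
    Function.Bijective (fun u : A => m u a) ∧
    AlgIso F (fun u v : A => m (m u a) (m v a)) (fun u v : B => m' u v) ∧
    Isotopic F (fun u v : A => m u v) (fun u v : B => m' u v) := by
  obtain ⟨hJind, hJspan, he_left, he_right, hxx, hyy, hxy, hyx⟩ := hJ
  simp only [one_smul, zero_smul, add_zero] at hxy hyx
  have hRa : Function.Involutive (fun u => m u a) := C₂.rightMul_involutive hspan haa hba hca
  obtain ⟨φ, hφb, hφa, hφc⟩ := exists_linearEquiv_map_triple hbasis.swap_first_two
    (by rwa [Set.insert_comm]) hJind hJspan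
  have hiso : AlgIso F (fun u v : A => m (m u a) (m v a)) (fun u v : B => m' u v) :=
    ⟨φ, C₂.map_isotope_mul (φ : A →ₗ[F] B) hspan haa hab hba hac hca hbb hcc hbc hcb
      he_left he_right hxx hyy hxy hyx hφa hφb hφc⟩
  let Ra : A ≃ₗ[F] A := .ofInvolutive (m.flip a) hRa
  exact ⟨hRa, hRa.bijective, hiso, .of_algIso_principalIsotope _ _ Ra Ra hiso⟩

/-- Over a field of characteristic `≠ 2`, the right multiplication
operator `R_a` by the basis element `a` of `C₂` is invertible with `R_a² = id`, and
the principal isotope `C₂^{(R_a, R_a)}` (with multiplication `u ∗ v = (u·a)·(v·a)`)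
is isomorphic to `J₂`. In particular, `C₂` and `J₂` are isotopic. -/
theorem stmt5 {F : Type*} [Field F] (hchar : (2 : F) ≠ 0)
    {A : Type*} [AddCommGroup A] [Module F A]
    (m : A →ₗ[F] A →ₗ[F] A) (a b c : A)
    (hbasis : LinearIndependent F ![a, b, c])
    (hspan : Submodule.span F {a, b, c} = ⊤)
    (haa : m a a = b) (hab : m a b = a) (hba : m b a = a)
    (hac : m a c = c) (hca : m c a = c)
    (hbb : m b b = 0) (hcc : m c c = 0)
    (hbc : m b c = b) (hcb : m c b = b)
    {B : Type*} [AddCommGroup B] [Module F B]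
    (m' : B →ₗ[F] B →ₗ[F] B) (e' x' y' : B)
    (hJ : IsCAlg F m' 1 0 0 e' x' y') :
    (∀ u : A, m (m u a) a = u) ∧
    Function.Bijective (fun u : A => m u a) ∧
    AlgIso F (fun u v : A => m (m u a) (m v a)) (fun u v : B => m' u v) ∧
    Isotopic F (fun u v : A => m u v) (fun u v : B => m' u v) :=
  stmt5_general m a b c hbasis hspan haa hab hba hac hca hbb hcc hbc hcb m' e' x' y' hJ
end

section
/- Let F be a field of characteristic ≠ 2 and α ∈ F. If α ≠ 0 and α ≠ −2, then the nil-rank of the algebra C(α) equals 2. The nil-rank of the algebra C(−2) equals 3, i.e. C(−2) has a basis consisting of nil-elements of index 2. -/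
open Module

/-!
Squaring `a • 1 + b • x + c • y` in `C(α)` gives
`(a² + 2αbc) • 1 + 2(ab + αbc) • x + 2(ac + αbc) • y`. For `α ≠ -2` the vanishing of these
coefficients forces `a = 0`, so every nil-element lies in the plane spanned by the nil-elements
`x, y` and the nil-rank is 2. For `α = -2` the element `2 + x + y` is a third nil-element,
independent of `x` and `y`, so `C(-2)` has a basis of nil-elements.
-/

open Module Submodule

section NilRank

variable {F : Type*} [Field F] {A : Type*} [AddCommGroup A] [Module F A]

theorem hasNilRank_of_forall_mem_span {mul : A → A → A} {k : ℕ} {v : Fin k → A}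
    (hv : LinearIndependent F v) (hv_nil : ∀ i, mul (v i) (v i) = 0)
    (hnil : ∀ u, mul u u = 0 → u ∈ span F (Set.range v)) : HasNilRank F mul k := by
  refine ⟨⟨v, hv, hv_nil⟩, fun w hw => ?_⟩
  by_contra! hw_nil
  have := FiniteDimensional.span_of_finite F (Set.finite_range v)
  have hle : span F (Set.range w) ≤ span F (Set.range v) :=
    span_le.2 (Set.range_subset_iff.2 fun i => hnil _ (hw_nil i))
  have := Submodule.finrank_mono hle
  rw [finrank_span_eq_card hw, finrank_span_eq_card hv] at this
  simp at this

end NilRank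

namespace IsCAlg

variable {F : Type*} [Field F] {A : Type*} [AddCommGroup A] [Module F A]
  {m : A →ₗ[F] A →ₗ[F] A} {α β γ : F} {e x y : A}

theorem linearIndependent_pair (h : IsCAlg F m α β γ e x y) : LinearIndependent F ![x, y] :=
  (linearIndependent_finCons.1 h.1).1

theorem notMem_span_pair (h : IsCAlg F m α β γ e x y) : e ∉ span F {x, y} := by
  have := (linearIndependent_finCons.1 h.1).2
  rwa [Matrix.range_cons_cons_empty] at this

theorem finrank_eq_three (h : IsCAlg F m α β γ e x y) : finrank F A = 3 := by
  have hspan : ⊤ ≤ span F (Set.range ![e, x, y]) := by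
    rw [Matrix.range_cons, Matrix.range_cons_cons_empty, Set.singleton_union, h.2.1]
  simpa using finrank_eq_card_basis (Basis.mk h.1 hspan)

theorem mul_self_eq (h : IsCAlg F m α β γ e x y) (a b c : F) :
    m (a • e + b • x + c • y) (a • e + b • x + c • y) =
      (a * a + 2 * α * b * c) • e + (2 * a * b + 2 * β * b * c) • x +
        (2 * a * c + 2 * γ * b * c) • y := by
  obtain ⟨-, -, he, he', hx, hy, hxy, hyx⟩ := h
  simp only [map_add, map_smul, LinearMap.add_apply, LinearMap.smul_apply,
    he, he', hx, hy, hxy, hyx, smul_add, smul_smul, smul_zero]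
  module

theorem coeffs_eq_zero (h : IsCAlg F m α β γ e x y) {a b c : F}
    (habc : a • e + b • x + c • y = 0) : a = 0 ∧ b = 0 ∧ c = 0 := by
  have := Fintype.linearIndependent_iff.1 h.1 ![a, b, c]
    (by simpa [Fin.sum_univ_three] using habc)
  exact ⟨this 0, this 1, this 2⟩

theorem coeff_e_eq_zero_of_mul_self_eq_zero (hchar : (2 : F) ≠ 0) (hα : α ≠ -2)
    (h : IsCAlg F m α α α e x y) {a b c : F}
    (hnil : m (a • e + b • x + c • y) (a • e + b • x + c • y) = 0) : a = 0 := by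
  rw [h.mul_self_eq] at hnil
  obtain ⟨he, hx, hy⟩ := h.coeffs_eq_zero hnil
  by_contra ha
  have hbc : b = c := mul_left_cancel₀ (mul_ne_zero hchar ha) (by linear_combination hx - hy)
  subst hbc
  have hab : a = 2 * b := by
    have : a * (a - 2 * b) = 0 := by linear_combination he - hx
    linear_combination (mul_eq_zero.1 this).resolve_left ha
  have hb : b * b = 0 := by
    have hα2 : 2 * (α + 2) ≠ 0 := mul_ne_zero hchar fun h' => hα (by linear_combination h')
    have : 2 * (α + 2) * (b * b) = 0 := by linear_combination hx - 2 * b * hab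
    exact (mul_eq_zero.1 this).resolve_left hα2
  exact ha (by rw [hab, mul_self_eq_zero.1 hb, mul_zero])

theorem mem_span_pair_of_mul_self_eq_zero (hchar : (2 : F) ≠ 0) (hα : α ≠ -2)
    (h : IsCAlg F m α α α e x y) {u : A} (hu : m u u = 0) : u ∈ span F {x, y} := by
  obtain ⟨a, b, c, rfl⟩ := mem_span_triple.1 (h.2.1 ▸ mem_top : u ∈ span F {e, x, y})
  rw [h.coeff_e_eq_zero_of_mul_self_eq_zero hchar hα hu, zero_smul, zero_add]
  exact mem_span_pair.2 ⟨b, c, rfl⟩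

theorem linearIndependent_smul_add_add (h : IsCAlg F m α β γ e x y) {a : F} (ha : a ≠ 0) :
    LinearIndependent F ![a • e + x + y, x, y] := by
  refine linearIndependent_finCons.2 ⟨h.linearIndependent_pair, fun hz => h.notMem_span_pair ?_⟩
  rw [Matrix.range_cons_cons_empty] at hz
  have hx : x ∈ span F {x, y} := subset_span (by simp)
  have hy : y ∈ span F {x, y} := subset_span (by simp)
  exact (smul_mem_iff _ ha).1
    ((Submodule.add_mem_iff_left _ hx).1 ((Submodule.add_mem_iff_left _ hy).1 hz))

theorem mul_self_two_smul_add_add (h : IsCAlg F m (-2) (-2) (-2) e x y) :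
    m ((2 : F) • e + x + y) ((2 : F) • e + x + y) = 0 := by
  have := h.mul_self_eq 2 1 1
  rw [one_smul, one_smul] at this
  rw [this]
  norm_num

end IsCAlg

/-- Over a field of characteristic `≠ 2`: if `α ≠ 0` and
`α ≠ -2`, then the nil-rank of `C(α) = C(α, α, α)` equals `2`; the nil-rank of
`C(-2)` equals `3`, i.e. `C(-2)` has a basis of nil-elements of index 2. -/
theorem stmt11 {F : Type*} [Field F] (hchar : (2 : F) ≠ 0) :
    (∀ α : F, α ≠ 0 → α ≠ -2 →
      ∀ (A : Type) [AddCommGroup A] [Module F A],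
      ∀ (m : A →ₗ[F] A →ₗ[F] A) (e x y : A), IsCAlg F m α α α e x y →
        HasNilRank F (fun u v : A => m u v) 2) ∧
    (∀ (A : Type) [AddCommGroup A] [Module F A],
      ∀ (m : A →ₗ[F] A →ₗ[F] A) (e x y : A), IsCAlg F m (-2) (-2) (-2) e x y →
        HasNilRank F (fun u v : A => m u v) 3 ∧
        ∃ v : Fin 3 → A, LinearIndependent F v ∧
          Submodule.span F (Set.range v) = ⊤ ∧ ∀ i, m (v i) (v i) = 0) := by
  refine ⟨fun α _ hα A _ _ m e x y h => ?_, fun A _ _ m e x y h => ?_⟩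
  all_goals obtain ⟨-, -, -, -, hx, hy, -⟩ := id h
  · refine hasNilRank_of_forall_mem_span h.linearIndependent_pair
      (Fin.forall_fin_two.2 ⟨hx, hy⟩) fun _ hu => ?_
    rw [Matrix.range_cons_cons_empty]
    exact h.mem_span_pair_of_mul_self_eq_zero hchar hα hu
  · have hv := h.linearIndependent_smul_add_add hchar
    have hspan := hv.span_eq_top_of_card_eq_finrank (by simp [h.finrank_eq_three])
    have hnil : ∀ i, m (![(2 : F) • e + x + y, x, y] i) (![(2 : F) • e + x + y, x, y] i) = 0 :=
      Fin.forall_fin_succ.2 ⟨h.mul_self_two_smul_add_add, Fin.forall_fin_two.2 ⟨hx, hy⟩⟩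
    exact ⟨hasNilRank_of_forall_mem_span hv hnil fun _ _ => hspan ▸ mem_top, _, hv, hspan, hnil⟩
end

section
/- Let F be a field of characteristic ≠ 2. The algebras C(1,1,0) and C(1,0,0) = J₂ are isotopic but not isomorphic. (Non-isomorphism holds because J₂ is a Jordan algebra while in C(1,1,0) the associator identity (u²,v,u) = 0 fails: (xy, x, y) = −x ≠ 0.) -/
open Module

/-
Isotopy: with `φ = ψ : 1 ↦ 1 - x/2, x ↦ x, y ↦ y` and `ξ : 1 ↦ 1 - x, x ↦ x, y ↦ y - 1/2`
(both shears of the canonical basis), `φ(u) φ(v) = ξ(uv)` is a coordinate computation; the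
factor `1/2` is where the characteristic enters.

Non-isomorphism: in `J₂` every square-zero element lies in `span {x, y}`, and a product of two
such elements is a multiple of `1`. An isomorphism `ψ : C(1,1,0) → J₂` fixes `1` and maps `x`, `y`
to square-zero elements, so `ψ(x) ψ(y)` is a multiple of `1`; but it equals `ψ(xy) = 1 + ψ(x)`
with `ψ(x) ∈ span {x, y}` nonzero.
-/

open Submodule

section Triples

variable {R V W : Type*} [CommRing R] [AddCommGroup V] [Module R V] [AddCommGroup W] [Module R W]
  {u v w : V}

theorem exists_eq_smul_add_smul_add_smul (h : span R {u, v, w} = ⊤) (z : V) :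
    ∃ a b c : R, z = a • u + b • v + c • w := by
  have hz : z ∈ span R {u, v, w} := h ▸ mem_top
  obtain ⟨a, z', hz', rfl⟩ := mem_span_insert.mp hz
  obtain ⟨b, c, rfl⟩ := mem_span_pair.mp hz'
  exact ⟨a, b, c, by abel⟩

theorem LinearIndependent.eq_zero_of_triple (h : LinearIndependent R ![u, v, w]) {a b c : R}
    (h' : a • u + b • v + c • w = 0) : a = 0 ∧ b = 0 ∧ c = 0 := by
  have := Fintype.linearIndependent_iff.mp h ![a, b, c] (by simpa [Fin.sum_univ_three] using h')
  exact ⟨this 0, this 1, this 2⟩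

theorem LinearIndependent.shear (h : LinearIndependent R ![u, v, w]) (s t : R) :
    LinearIndependent R ![u + s • v, v, w + t • u] := by
  refine Fintype.linearIndependent_iff.mpr fun g hg => ?_
  obtain ⟨h₀, h₁, h₂⟩ := h.eq_zero_of_triple (a := g 0 + t * g 2) (b := s * g 0 + g 1) (c := g 2)
    (by rw [← hg, Fin.sum_univ_three]; simp only [Matrix.cons_val]; module)
  have hg₀ : g 0 = 0 := by simpa [h₂] using h₀
  have hg₁ : g 1 = 0 := by simpa [hg₀] using h₁
  intro i
  fin_cases i <;> assumption

theorem span_shear (s t : R) : span R {u + s • v, v, w + t • u} = span R {u, v, w} := by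
  apply le_antisymm <;> rw [span_le, Set.insert_subset_iff, Set.insert_subset_iff,
    Set.singleton_subset_iff]
  · have hu : u ∈ span R {u, v, w} := subset_span (by simp)
    have hv : v ∈ span R {u, v, w} := subset_span (by simp)
    have hw : w ∈ span R {u, v, w} := subset_span (by simp)
    exact ⟨add_mem hu (smul_mem _ _ hv), hv, add_mem hw (smul_mem _ _ hu)⟩
  · have hu' : u + s • v ∈ span R {u + s • v, v, w + t • u} := subset_span (by simp)
    have hv : v ∈ span R {u + s • v, v, w + t • u} := subset_span (by simp)
    have hw' : w + t • u ∈ span R {u + s • v, v, w + t • u} := subset_span (by simp)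
    have hu : u ∈ span R {u + s • v, v, w + t • u} := by
      simpa using sub_mem hu' (smul_mem _ s hv)
    exact ⟨hu, hv, by simpa using sub_mem hw' (smul_mem _ t hu)⟩

theorem exists_linearEquiv_shear (hli : LinearIndependent R ![u, v, w]) (hsp : span R {u, v, w} = ⊤)
    {u' v' w' : W} (hli' : LinearIndependent R ![u', v', w']) (hsp' : span R {u', v', w'} = ⊤)
    (s t : R) : ∃ Φ : V ≃ₗ[R] W, ∀ a b c : R,
      Φ (a • u + b • v + c • w) = (a + t * c) • u' + (s * a + b) • v' + c • w' := by
  let b := Basis.mk hli (by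
    rw [Matrix.range_cons, Matrix.range_cons_cons_empty, Set.singleton_union, hsp])
  let b' := Basis.mk (hli'.shear s t) (by
    rw [Matrix.range_cons, Matrix.range_cons_cons_empty, Set.singleton_union, span_shear, hsp'])
  refine ⟨b.equiv b' (Equiv.refl _), fun a₁ a₂ a₃ => ?_⟩
  have hb (i : Fin 3) :
      b.equiv b' (Equiv.refl _) (![u, v, w] i) = ![u' + s • v', v', w' + t • u'] i := by
    simpa [b, b'] using b.equiv_apply i b' (Equiv.refl _)
  have hu := hb 0; have hv := hb 1; have hw := hb 2
  simp only [Matrix.cons_val] at hu hv hw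
  rw [map_add, map_add, map_smul, map_smul, map_smul, hu, hv, hw]
  module

end Triples

section CAlgebra

variable {F A : Type*} [Field F] [AddCommGroup A] [Module F A] {m : A →ₗ[F] A →ₗ[F] A}
  {α β γ : F} {e x y : A}

namespace IsCAlg

theorem mul_smul_add (h : IsCAlg F m α β γ e x y) (a b c a' b' c' : F) :
    m (a • e + b • x + c • y) (a' • e + b' • x + c' • y) =
      (a * a' + (b * c' + c * b') * α) • e + (a * b' + b * a' + (b * c' + c * b') * β) • x +
        (a * c' + c * a' + (b * c' + c * b') * γ) • y := by
  obtain ⟨-, -, he, he', hxx, hyy, hxy, hyx⟩ := h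
  simp only [map_add, map_smul, LinearMap.add_apply, LinearMap.smul_apply, he, he', hxx, hyy,
    hxy, hyx, smul_zero]
  module

theorem mul_smul_add_smul (h : IsCAlg F m α β γ e x y) (b c b' c' : F) :
    m (b • x + c • y) (b' • x + c' • y) = (b * c' + c * b') • (α • e + β • x + γ • y) := by
  have := h.mul_smul_add 0 b c 0 b' c'
  simp only [zero_smul, zero_add, zero_mul, mul_zero] at this
  rw [this]
  module

theorem exists_eq_of_mul_self_eq_zero (h : IsCAlg F m α 0 0 e x y) {u : A} (hu : m u u = 0) :
    ∃ b c : F, u = b • x + c • y := by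
  obtain ⟨a, b, c, rfl⟩ := exists_eq_smul_add_smul_add_smul h.2.1 u
  rw [h.mul_smul_add] at hu
  obtain ⟨h₀, h₁, h₂⟩ := h.1.eq_zero_of_triple hu
  have ha : a ^ 3 = 0 := by linear_combination a * h₀ - c * α * h₁
  exact ⟨b, c, by rw [pow_eq_zero_iff three_ne_zero |>.mp ha, zero_smul, zero_add]⟩

end IsCAlg

theorem LinearEquiv.map_eq_of_leftId_of_rightId {B : Type*} [AddCommGroup B] [Module F B]
    {mA : A → A → A} {mB : B → B → B} (ψ : A ≃ₗ[F] B) (hψ : ∀ u v, ψ (mA u v) = mB (ψ u) (ψ v))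
    {e' : B} (he : ∀ u, mA e u = u) (he' : ∀ w, mB w e' = w) : ψ e = e' := by
  calc ψ e = mB (ψ e) e' := (he' _).symm
    _ = ψ (mA e (ψ.symm e')) := by rw [hψ, ψ.apply_symm_apply]
    _ = e' := by rw [he, ψ.apply_symm_apply]

variable {B : Type*} [AddCommGroup B] [Module F B] {m' : B →ₗ[F] B →ₗ[F] B} {e' x' y' : B}

theorem isotopic_C110_J2 (hchar : (2 : F) ≠ 0) (hA : IsCAlg F m 1 1 0 e x y)
    (hB : IsCAlg F m' 1 0 0 e' x' y') :
    Isotopic F (fun u v : A => m u v) (fun u v : B => m' u v) := by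
  obtain ⟨φ, hφ⟩ := exists_linearEquiv_shear hA.1 hA.2.1 hB.1 hB.2.1 (-2⁻¹) 0
  obtain ⟨ξ, hξ⟩ := exists_linearEquiv_shear hA.1 hA.2.1 hB.1 hB.2.1 (-1) (-2⁻¹)
  refine ⟨φ, φ, ξ, fun u v => ?_⟩
  beta_reduce
  obtain ⟨a, b, c, rfl⟩ := exists_eq_smul_add_smul_add_smul hA.2.1 u
  obtain ⟨a', b', c', rfl⟩ := exists_eq_smul_add_smul_add_smul hA.2.1 v
  rw [hφ, hφ, hB.mul_smul_add, hA.mul_smul_add, hξ]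
  match_scalars <;> field_simp <;> ring

theorem not_algIso_C110_J2 (hA : IsCAlg F m 1 1 0 e x y) (hB : IsCAlg F m' 1 0 0 e' x' y') :
    ¬ AlgIso F (fun u v : A => m u v) (fun u v : B => m' u v) := by
  rintro ⟨ψ, hψ⟩
  beta_reduce at hψ
  obtain ⟨-, -, hAe, -, hAxx, hAyy, hAxy, -⟩ := hA
  have he : ψ e = e' := ψ.map_eq_of_leftId_of_rightId hψ hAe hB.2.2.2.1
  have hsq {u : A} (hu : m u u = 0) : m' (ψ u) (ψ u) = 0 := by rw [← hψ, hu, map_zero]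
  obtain ⟨b, c, hx⟩ := hB.exists_eq_of_mul_self_eq_zero (hsq hAxx)
  obtain ⟨b', c', hy⟩ := hB.exists_eq_of_mul_self_eq_zero (hsq hAyy)
  have hxy := hψ x y
  rw [hAxy, hx, hy, hB.mul_smul_add_smul] at hxy
  simp only [zero_smul, one_smul, add_zero, map_add, he, hx] at hxy
  obtain ⟨h₀, h₁, h₂⟩ := hB.1.eq_zero_of_triple (a := 1 - (b * c' + c * b')) (b := b) (c := c)
    (by linear_combination (norm := module) hxy)
  exact one_ne_zero (by linear_combination h₀ + c' * h₁ + b' * h₂ : (1 : F) = 0)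

end CAlgebra

/-- Over a field of characteristic `≠ 2`, the algebras
`C(1, 1, 0)` and `C(1, 0, 0) = J₂` are isotopic but not isomorphic. -/
theorem stmt13 {F : Type*} [Field F] (hchar : (2 : F) ≠ 0)
    {A : Type*} [AddCommGroup A] [Module F A]
    (m : A →ₗ[F] A →ₗ[F] A) (e x y : A)
    (hA : IsCAlg F m 1 1 0 e x y)
    {B : Type*} [AddCommGroup B] [Module F B]
    (m' : B →ₗ[F] B →ₗ[F] B) (e' x' y' : B)
    (hB : IsCAlg F m' 1 0 0 e' x' y') :
    Isotopic F (fun u v : A => m u v) (fun u v : B => m' u v) ∧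
    ¬ AlgIso F (fun u v : A => m u v) (fun u v : B => m' u v) :=
  ⟨isotopic_C110_J2 hchar hA hB, not_algIso_C110_J2 hA hB⟩
end

section
/- Let F be a field of characteristic ≠ 2. The cyclotomic algebra C₃ over F possesses a standard isotope isomorphic to the algebra C(−2). Explicitly, for c = x + y + z the right multiplication operator R_c is invertible and the principal isotope C₃^{(R_c⁻¹, R_c⁻¹)} is isomorphic to C(−2). -/
open Module

/-!
On `C₃` with `c = x + y + z` the right multiplication satisfies `R_c² = R_c + 2`, so for
`2 ≠ 0` it is invertible with `R_c⁻¹ = (R_c - 1) / 2`. In the isotope `u ∗ v = R_c⁻¹u · R_c⁻¹v`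
the element `2c` is the identity (as `R_c⁻¹(2c) = c`), while `X = -2(y + z) = R_c(-2x)` and
`Y = -2(x + z) = R_c(-2y)` square to zero and `X ∗ Y = 4z = -2(2c + X + Y)`. Two algebras with
canonical bases realizing the same `C(α, β, γ)` are isomorphic, so the isotope is `C(-2)`.
-/

open Submodule

section Vec3

variable {F V : Type*} [Field F] [AddCommGroup V] [Module F V]

lemma span_range_vec3 (a b c : V) : span F (Set.range ![a, b, c]) = span F {a, b, c} := by
  rw [Matrix.range_cons, Matrix.range_cons_cons_empty, Set.singleton_union]

noncomputable def basisOfVec3 {a b c : V} (hli : LinearIndependent F ![a, b, c])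
    (hsp : span F {a, b, c} = ⊤) : Basis (Fin 3) F V :=
  Basis.mk hli (by rw [span_range_vec3, hsp])

@[simp]
lemma basisOfVec3_apply {a b c : V} (hli : LinearIndependent F ![a, b, c])
    (hsp : span F {a, b, c} = ⊤) (i : Fin 3) : basisOfVec3 hli hsp i = ![a, b, c] i :=
  Basis.mk_apply _ _ _

lemma linearIndependent_vec3_of_span_eq_top (hV : finrank F V = 3) {a b c : V}
    (hsp : span F {a, b, c} = ⊤) : LinearIndependent F ![a, b, c] :=
  linearIndependent_of_top_le_span_of_card_eq_finrank (by rw [span_range_vec3, hsp])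
    (by rw [hV, Fintype.card_fin])

lemma span_isotopeBasis_eq_top (h2 : (2 : F) ≠ 0) {x y z : V} (hsp : span F {x, y, z} = ⊤) :
    span F {(2 : F) • (x + y + z), (-2 : F) • (y + z), (-2 : F) • (x + z)} = ⊤ := by
  set S := span F {(2 : F) • (x + y + z), (-2 : F) • (y + z), (-2 : F) • (x + z)}
  have hE : (2 : F) • (x + y + z) ∈ S := subset_span (by simp)
  have hX : (-2 : F) • (y + z) ∈ S := subset_span (by simp)
  have hY : (-2 : F) • (x + z) ∈ S := subset_span (by simp)
  have hx : x = (2 : F)⁻¹ • ((2 : F) • (x + y + z) + (-2 : F) • (y + z)) := by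
    match_scalars <;> field_simp <;> ring
  have hy : y = (2 : F)⁻¹ • ((2 : F) • (x + y + z) + (-2 : F) • (x + z)) := by
    match_scalars <;> field_simp <;> ring
  have hz :
      z = -(2 : F)⁻¹ • ((2 : F) • (x + y + z) + (-2 : F) • (y + z) + (-2 : F) • (x + z)) := by
    match_scalars <;> field_simp <;> ring
  rw [eq_top_iff, ← hsp, span_le, Set.insert_subset_iff, Set.insert_subset_iff,
    Set.singleton_subset_iff]
  refine ⟨?_, ?_, ?_⟩
  · rw [hx]; exact S.smul_mem _ (S.add_mem hE hX)
  · rw [hy]; exact S.smul_mem _ (S.add_mem hE hY)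
  · rw [hz]; exact S.smul_mem _ (S.add_mem (S.add_mem hE hX) hY)

end Vec3

section CAlg

variable {F : Type*} [Field F] {A B : Type*} [AddCommGroup A] [Module F A]
  [AddCommGroup B] [Module F B] {μ : A →ₗ[F] A →ₗ[F] A} {μ' : B →ₗ[F] B →ₗ[F] B}
  {α β γ : F} {e x y : A} {e' x' y' : B}

noncomputable def IsCAlg.basis_s16 (h : IsCAlg F μ α β γ e x y) : Basis (Fin 3) F A :=
  basisOfVec3 h.1 h.2.1

theorem IsCAlg.algIso (h : IsCAlg F μ α β γ e x y) (h' : IsCAlg F μ' α β γ e' x' y') :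
    AlgIso F (fun u v => μ u v) (fun u v => μ' u v) := by
  let ψ := h.basis_s16.equiv h'.basis_s16 (Equiv.refl _)
  have hψ : ∀ i, ψ (![e, x, y] i) = ![e', x', y'] i := fun i => by
    simpa [ψ, IsCAlg.basis_s16] using h.basis_s16.equiv_apply i h'.basis_s16 (Equiv.refl _)
  have hψe : ψ e = e' := hψ 0
  have hψx : ψ x = x' := hψ 1
  have hψy : ψ y = y' := hψ 2
  have hmul : μ.compr₂ ψ.toLinearMap = μ'.compl₁₂ ψ.toLinearMap ψ.toLinearMap := by
    refine h.basis_s16.ext fun i => h.basis_s16.ext fun j => ?_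
    obtain ⟨-, -, hel, her, hxx, hyy, hxy, hyx⟩ := id h
    obtain ⟨-, -, hel', her', hxx', hyy', hxy', hyx'⟩ := id h'
    fin_cases i <;> fin_cases j <;>
      simp [IsCAlg.basis_s16, hψe, hψx, hψy, hel, her, hxx, hyy, hxy, hyx, hel', her', hxx', hyy',
        hxy', hyx']
  exact ⟨ψ, fun u v => LinearMap.congr_fun₂ hmul u v⟩

end CAlg

section EquivOfMulSelf

variable {F V : Type*} [Field F] [AddCommGroup V] [Module F V]

noncomputable def equivOfMulSelfEq (f : Module.End F V) {a b : F} (hb : b ≠ 0)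
    (hf : f * f = a • f + b • 1) : V ≃ₗ[F] V :=
  LinearEquiv.ofLinearMap (b⁻¹ • (f - a • 1)) f
    (by
      rw [← Module.End.mul_eq_comp, smul_mul_assoc, sub_mul, hf, smul_mul_assoc, one_mul,
        add_sub_cancel_left, smul_smul, inv_mul_cancel₀ hb, one_smul, Module.End.one_eq_id])
    (by
      rw [← Module.End.mul_eq_comp, mul_smul_comm, mul_sub, hf, mul_smul_comm, mul_one,
        add_sub_cancel_left, smul_smul, inv_mul_cancel₀ hb, one_smul, Module.End.one_eq_id])

lemma equivOfMulSelfEq_apply (f : Module.End F V) {a b : F} (hb : b ≠ 0)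
    (hf : f * f = a • f + b • 1) (u : V) :
    equivOfMulSelfEq f hb hf u = b⁻¹ • (f u - a • u) :=
  rfl

end EquivOfMulSelf

structure IsC3Alg {F A : Type*} [Field F] [AddCommGroup A] [Module F A]
    (m : A →ₗ[F] A →ₗ[F] A) (x y z : A) : Prop where
  linearIndependent : LinearIndependent F ![x, y, z]
  span_eq_top : span F {x, y, z} = ⊤
  xx : m x x = 0
  yy : m y y = 0
  zz : m z z = 0
  xy : m x y = z
  yx : m y x = z
  yz : m y z = x
  zy : m z y = x
  zx : m z x = y
  xz : m x z = y

namespace IsC3Alg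

variable {F A : Type*} [Field F] [AddCommGroup A] [Module F A]
  {m : A →ₗ[F] A →ₗ[F] A} {x y z : A}

noncomputable def basis_s16 (h : IsC3Alg m x y z) : Basis (Fin 3) F A :=
  basisOfVec3 h.linearIndependent h.span_eq_top

lemma finrank_eq (h : IsC3Alg m x y z) : finrank F A = 3 := by
  rw [finrank_eq_card_basis h.basis_s16, Fintype.card_fin]

lemma comm (h : IsC3Alg m x y z) (u v : A) : m u v = m v u := by
  have hflip : m.flip = m := h.basis_s16.ext fun i => h.basis_s16.ext fun j => by
    fin_cases i <;> fin_cases j <;>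
      simp [basis_s16, h.xx, h.yy, h.zz, h.xy, h.yx, h.yz, h.zy, h.zx, h.xz]
  exact (LinearMap.congr_fun₂ hflip u v).symm

lemma rightMul_sum_sq (h : IsC3Alg m x y z) :
    m.flip (x + y + z) * m.flip (x + y + z) = (1 : F) • m.flip (x + y + z) + (2 : F) • 1 :=
  h.basis_s16.ext fun i => by
    fin_cases i <;> simp [basis_s16, h.xx, h.yy, h.zz, h.xy, h.yx, h.yz, h.zy, h.zx, h.xz] <;> module

noncomputable def rightMulSumInv (h : IsC3Alg m x y z) (h2 : (2 : F) ≠ 0) : A ≃ₗ[F] A :=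
  equivOfMulSelfEq _ h2 h.rightMul_sum_sq

lemma rightMulSumInv_mul (h : IsC3Alg m x y z) (h2 : (2 : F) ≠ 0) (u : A) :
    h.rightMulSumInv h2 (m u (x + y + z)) = u :=
  (h.rightMulSumInv h2).apply_symm_apply u

lemma mul_rightMulSumInv (h : IsC3Alg m x y z) (h2 : (2 : F) ≠ 0) (u : A) :
    m (h.rightMulSumInv h2 u) (x + y + z) = u :=
  (h.rightMulSumInv h2).symm_apply_apply u

lemma rightMulSumInv_apply (h : IsC3Alg m x y z) (h2 : (2 : F) ≠ 0) (u : A) :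
    h.rightMulSumInv h2 u = (2 : F)⁻¹ • (m u (x + y + z) - u) := by
  rw [rightMulSumInv, equivOfMulSelfEq_apply, one_smul]
  rfl

lemma isCAlg_isotope (h : IsC3Alg m x y z) (h2 : (2 : F) ≠ 0) :
    IsCAlg F (m.compl₁₂ (h.rightMulSumInv h2).toLinearMap (h.rightMulSumInv h2).toLinearMap)
      (-2) (-2) (-2) ((2 : F) • (x + y + z)) ((-2 : F) • (y + z)) ((-2 : F) • (x + z)) := by
  set φ := h.rightMulSumInv h2
  have hφ : ∀ u, φ u = (2 : F)⁻¹ • (m u (x + y + z) - u) := h.rightMulSumInv_apply h2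
  have hφe : φ ((2 : F) • (x + y + z)) = x + y + z := by
    simp [hφ, h.xx, h.yy, h.zz, h.xy, h.yx, h.yz, h.zy, h.zx, h.xz]
    match_scalars <;> field_simp <;> ring
  have hφx : φ ((-2 : F) • (y + z)) = (-2 : F) • x := by
    simp [hφ, h.yy, h.zz, h.yx, h.yz, h.zy, h.zx]
    match_scalars <;> field_simp <;> ring
  have hφy : φ ((-2 : F) • (x + z)) = (-2 : F) • y := by
    simp [hφ, h.xx, h.zz, h.xy, h.zy, h.zx, h.xz]
    match_scalars <;> field_simp <;> ring
  have hspan := span_isotopeBasis_eq_top h2 h.span_eq_top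
  refine ⟨linearIndependent_vec3_of_span_eq_top h.finrank_eq hspan, hspan, fun u => ?_,
    fun u => ?_, ?_, ?_, ?_, ?_⟩
  · simp only [LinearMap.compl₁₂_apply, LinearEquiv.coe_coe, hφe]
    rw [h.comm, h.mul_rightMulSumInv]
  · simp only [LinearMap.compl₁₂_apply, LinearEquiv.coe_coe, hφe]
    exact h.mul_rightMulSumInv h2 u
  all_goals simp only [LinearMap.compl₁₂_apply, LinearEquiv.coe_coe, hφx, hφy]
  · simp [h.xx]
  · simp [h.yy]
  · simp only [map_smul, LinearMap.smul_apply, h.xy]; module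
  · simp only [map_smul, LinearMap.smul_apply, h.yx]; module

end IsC3Alg

/-- Over a field of characteristic `≠ 2`, the cyclotomic algebra
`C₃` (basis `(x, y, z)` with `x² = y² = z² = 0`, `xy = z`, `yz = x`, `zx = y`)
possesses a standard isotope isomorphic to `C(-2)`: for `c = x + y + z` the right
multiplication operator `R_c` is invertible and the principal isotope
`C₃^{(R_c⁻¹, R_c⁻¹)}` is isomorphic to `C(-2)`. -/
theorem stmt16 {F : Type*} [Field F] (hchar : (2 : F) ≠ 0)
    {A : Type*} [AddCommGroup A] [Module F A]
    (m : A →ₗ[F] A →ₗ[F] A) (x y z : A)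
    (hbasis : LinearIndependent F ![x, y, z])
    (hspan : Submodule.span F {x, y, z} = ⊤)
    (hxx : m x x = 0) (hyy : m y y = 0) (hzz : m z z = 0)
    (hxy : m x y = z) (hyx : m y x = z)
    (hyz : m y z = x) (hzy : m z y = x)
    (hzx : m z x = y) (hxz : m x z = y)
    {B : Type*} [AddCommGroup B] [Module F B]
    (m' : B →ₗ[F] B →ₗ[F] B) (e' x' y' : B)
    (hB : IsCAlg F m' (-2) (-2) (-2) e' x' y') :
    Function.Bijective (fun u : A => m u (x + y + z)) ∧
    ∃ φ : A ≃ₗ[F] A, (∀ u : A, φ (m u (x + y + z)) = u) ∧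
      AlgIso F (fun u v : A => m (φ u) (φ v)) (fun u v : B => m' u v) := by
  have hC3 : IsC3Alg m x y z := ⟨hbasis, hspan, hxx, hyy, hzz, hxy, hyx, hyz, hzy, hzx, hxz⟩
  exact ⟨(hC3.rightMulSumInv hchar).symm.bijective, hC3.rightMulSumInv hchar,
    hC3.rightMulSumInv_mul hchar, (hC3.isCAlg_isotope hchar).algIso hB⟩
end

section
/- Let F be a field and n ≥ 2. The (n+1)-dimensional commutative algebra G_n over F is simple: its multiplication is nonzero and its only ideals are 0 and G_n. -/
open Module

/-!
Indices are 0-based and read mod `n`, so the multiplication table of `G_n` is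
`x_i e = x_i + x_{i+1}` except for `x_0 e = e + x_1`; write `V` for the span of the `x_i`.

An ideal `I ⊄ V` contains some `c e + v` with `c ≠ 0` and `v ∈ V`; as `x_j V = 0`, multiplying
by `x_j` puts every `x_j e` in `I`. Then `e = (x_0 e) e - x_1 e ∈ I`, so `x_1 = x_0 e - e ∈ I`,
and `x_{i+1} = x_i e - x_i` walks once around the cycle.

An ideal `I ⊆ V` is stable under `u ↦ u e` and has vanishing `e`-coordinate. The `e`-coordinate
of `u e` is the sum of the `e`- and `x_0`-coordinates of `u`, and the `x_{i+1}`-coordinate of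
`u e` is the `x_i`-coordinate of `u` plus (unless `i + 1 = 0`) its `x_{i+1}`-coordinate. So the
`x_0`-coordinate vanishes on `I`, and then the others do, going backwards around the cycle.
-/

open Fin.NatCast in
theorem Fin.cyclic_induction {n : ℕ} [NeZero n] {p : Fin n → Prop} (a : Fin n) (ha : p a)
    (hp : ∀ i, p i → p (i + 1)) (j : Fin n) : p j := by
  have key : ∀ t : ℕ, p (a + (t : Fin n)) := by
    intro t
    induction t with
    | zero => simpa using ha
    | succ t ih => simpa [add_assoc] using hp _ ih
  simpa using key (j - a).val

theorem Fin.cyclic_reverse_induction {n : ℕ} [NeZero n] {p : Fin n → Prop} (a : Fin n)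
    (ha : p a) (hp : ∀ i, p (i + 1) → p i) (j : Fin n) : p j := by
  by_contra hj
  exact Fin.cyclic_induction (p := fun i => ¬ p i) j hj (fun i hi h => hi (hp i h)) a ha

section CyclicTable

variable {F A : Type*} [Field F] [AddCommGroup A] [Module F A] {n : ℕ}
  {m : A →ₗ[F] A →ₗ[F] A} {x : Fin n → A} {e : A}

theorem mul_eq_zero_of_mem_span (hxx : ∀ i j, m (x i) (x j) = 0) (j : Fin n) {v : A}
    (hv : v ∈ Submodule.span F (Set.range x)) : m (x j) v = 0 := by
  have : Submodule.span F (Set.range x) ≤ LinearMap.ker (m (x j)) :=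
    Submodule.span_le.mpr (by rintro _ ⟨i, rfl⟩; exact hxx j i)
  exact this hv

theorem mul_e_mem_of_not_le_span (hxx : ∀ i j, m (x i) (x j) = 0)
    (hspan : Submodule.span F (Set.range (Fin.snoc x e : Fin (n + 1) → A)) = ⊤)
    {I : Submodule F A} (hI : ∀ a, ∀ u ∈ I, m a u ∈ I)
    (hIx : ¬ I ≤ Submodule.span F (Set.range x)) (j : Fin n) : m (x j) e ∈ I := by
  obtain ⟨u, hu, huV⟩ := Set.not_subset.mp hIx
  have hu_span : u ∈ Submodule.span F (insert e (Set.range x)) := by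
    rw [← Fin.range_snoc, hspan]; trivial
  obtain ⟨c, v, hv, rfl⟩ := Submodule.mem_span_insert.mp hu_span
  have hc : c ≠ 0 := by
    rintro rfl
    exact huV (by simpa using hv)
  have : m (x j) (c • e + v) = c • m (x j) e := by
    rw [map_add, map_smul, mul_eq_zero_of_mem_span hxx j hv, add_zero]
  simpa [this, hc] using I.smul_mem c⁻¹ (hI (x j) _ hu)

theorem eq_top_of_mul_e_mem [NeZero n] (hee : m e e = e)
    (hxe : ∀ i, m (x i) e = (if i = 0 then e else x i) + x (i + 1))
    (hspan : Submodule.span F (Set.range (Fin.snoc x e : Fin (n + 1) → A)) = ⊤)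
    {I : Submodule F A} (hI : ∀ u ∈ I, m u e ∈ I) (hIx : ∀ j, m (x j) e ∈ I) :
    I = ⊤ := by
  have he : e ∈ I := by
    have h := hI _ (hIx 0)
    rw [hxe 0, if_pos rfl, map_add, LinearMap.add_apply, hee] at h
    simpa using I.sub_mem h (hIx (0 + 1))
  have hx : ∀ j, x j ∈ I := by
    refine Fin.cyclic_induction (0 + 1) ?_ fun i hi => ?_
    · simpa [hxe] using I.sub_mem (hIx 0) he
    · have hi' : (if i = 0 then e else x i) ∈ I := by split_ifs <;> assumption
      simpa [hxe] using I.sub_mem (hIx i) hi'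
  rw [eq_top_iff, ← hspan, Submodule.span_le, Fin.range_snoc, Set.insert_subset_iff]
  exact ⟨he, Set.range_subset_iff.mpr hx⟩

theorem Basis.repr_snoc_castSucc {b : Basis (Fin (n + 1)) F A} (hb : ⇑b = Fin.snoc x e)
    (i : Fin n) : b.repr (x i) = Finsupp.single i.castSucc 1 := by
  rw [← b.repr_self]; simp [hb]

theorem Basis.repr_snoc_last {b : Basis (Fin (n + 1)) F A} (hb : ⇑b = Fin.snoc x e) :
    b.repr e = Finsupp.single (Fin.last n) 1 := by
  rw [← b.repr_self]; simp [hb]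

theorem coord_last_mul_e [NeZero n] (b : Basis (Fin (n + 1)) F A) (hb : ⇑b = Fin.snoc x e)
    (hee : m e e = e) (hxe : ∀ i, m (x i) e = (if i = 0 then e else x i) + x (i + 1))
    (u : A) :
    b.coord (Fin.last n) (m u e) = b.coord (Fin.last n) u + b.coord (Fin.castSucc 0) u := by
  suffices (b.coord (Fin.last n)).comp (m.flip e) =
      b.coord (Fin.last n) + b.coord (Fin.castSucc 0) from LinearMap.congr_fun this u
  refine b.ext fun k => ?_
  induction k using Fin.lastCases with
  | last => simp [hb, hee, Basis.repr_snoc_last hb, NeZero.ne n]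
  | cast i =>
    by_cases hi : i = 0 <;>
      simp [hb, hxe, hi, Basis.repr_snoc_last hb, Basis.repr_snoc_castSucc hb, NeZero.ne n]

theorem coord_succ_mul_e [NeZero n] (b : Basis (Fin (n + 1)) F A) (hb : ⇑b = Fin.snoc x e)
    (hee : m e e = e) (hxe : ∀ i, m (x i) e = (if i = 0 then e else x i) + x (i + 1))
    (j : Fin n) (u : A) :
    b.coord (j + 1).castSucc (m u e) =
      b.coord j.castSucc u + if j + 1 = 0 then 0 else b.coord (j + 1).castSucc u := by
  split_ifs with hj
  · rw [add_zero]
    refine LinearMap.congr_fun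
      (?_ : (b.coord (j + 1).castSucc).comp (m.flip e) = b.coord j.castSucc) u
    obtain rfl := eq_neg_of_add_eq_zero_left hj
    refine b.ext fun k => ?_
    induction k using Fin.lastCases with
    | last => simp [hb, hee, Basis.repr_snoc_last hb, NeZero.ne n]
    | cast i =>
      by_cases hi : i = 0 <;>
        simp [hb, hxe, hi, Basis.repr_snoc_last hb, Basis.repr_snoc_castSucc hb,
          Finsupp.single_apply, eq_comm (a := (0 : Fin (n + 1))), Fin.one_eq_zero_iff,
          NeZero.ne n, eq_neg_iff_add_eq_zero]
  · refine LinearMap.congr_fun (?_ : (b.coord (j + 1).castSucc).comp (m.flip e) =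
      b.coord j.castSucc + b.coord (j + 1).castSucc) u
    refine b.ext fun k => ?_
    induction k using Fin.lastCases with
    | last => simp [hb, hee, Basis.repr_snoc_last hb]
    | cast i =>
      by_cases hi : i = 0 <;>
        simp [hb, hxe, hi, hj, Basis.repr_snoc_last hb, Basis.repr_snoc_castSucc hb,
          Finsupp.single_apply, eq_comm (a := (0 : Fin (n + 1))), add_comm]

theorem eq_bot_of_le_span [NeZero n] (b : Basis (Fin (n + 1)) F A) (hb : ⇑b = Fin.snoc x e)
    (hee : m e e = e) (hxe : ∀ i, m (x i) e = (if i = 0 then e else x i) + x (i + 1))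
    {I : Submodule F A} (hI : ∀ u ∈ I, m u e ∈ I)
    (hIx : I ≤ Submodule.span F (Set.range x)) : I = ⊥ := by
  have hlast : ∀ u ∈ I, b.coord (Fin.last n) u = 0 := by
    have : Submodule.span F (Set.range x) ≤ LinearMap.ker (b.coord (Fin.last n)) :=
      Submodule.span_le.mpr (by rintro _ ⟨i, rfl⟩; simp [Basis.repr_snoc_castSucc hb])
    exact fun u hu => this (hIx hu)
  have hx : ∀ j : Fin n, ∀ u ∈ I, b.coord j.castSucc u = 0 := by
    refine Fin.cyclic_reverse_induction 0 (fun u hu => ?_) fun j hj u hu => ?_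
    · have := coord_last_mul_e b hb hee hxe u
      rw [hlast _ (hI u hu), hlast u hu, zero_add] at this
      exact this.symm
    · have := coord_succ_mul_e b hb hee hxe j u
      rw [hj _ (hI u hu), hj u hu, ite_self, add_zero] at this
      exact this.symm
  rw [Submodule.eq_bot_iff]
  intro u hu
  refine b.repr.map_eq_zero_iff.mp (Finsupp.ext fun k => ?_)
  induction k using Fin.lastCases with
  | last => exact hlast u hu
  | cast j => exact hx j u hu

theorem isSimpleAlg_of_mul_e_eq [NeZero n] (m : A →ₗ[F] A →ₗ[F] A) (x : Fin n → A) (e : A)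
    (hbasis : LinearIndependent F (Fin.snoc x e : Fin (n + 1) → A))
    (hspan : Submodule.span F (Set.range (Fin.snoc x e : Fin (n + 1) → A)) = ⊤)
    (hxx : ∀ i j, m (x i) (x j) = 0) (hee : m e e = e)
    (hxe : ∀ i, m (x i) e = (if i = 0 then e else x i) + x (i + 1)) :
    IsSimpleAlg F (fun u v : A => m u v) := by
  have he : e ≠ 0 := by simpa using hbasis.ne_zero (Fin.last n)
  refine ⟨⟨e, e, by simpa [hee] using he⟩, fun I hI => ?_⟩
  by_cases hIx : I ≤ Submodule.span F (Set.range x)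
  · exact .inl <| eq_bot_of_le_span (Basis.mk hbasis hspan.ge) (Basis.coe_mk _ _) hee hxe
      (fun u hu => (hI e u hu).2) hIx
  · exact .inr <| eq_top_of_mul_e_mem hee hxe hspan (fun u hu => (hI e u hu).2)
      (mul_e_mem_of_not_le_span hxx hspan (fun a u hu => (hI a u hu).1) hIx)

end CyclicTable

/-- For `n ≥ 2`, the `(n+1)`-dimensional commutative algebra
`G_n` with basis `(x₁, …, x_n, e)` in which all products `x_i x_j` vanish,
`e² = e`, `x₁e = e + x₂`, `x_i e = x_i + x_{i+1}` for `2 ≤ i ≤ n − 1`, and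
`x_n e = x_n + x₁`, is simple. (Indices are shifted down by one below:
`x i` is `x_{i+1}`.) -/
theorem stmt18 {F : Type*} [Field F] (n : ℕ) (hn : 2 ≤ n)
    {A : Type*} [AddCommGroup A] [Module F A]
    (m : A →ₗ[F] A →ₗ[F] A) (x : Fin n → A) (e : A)
    (hbasis : LinearIndependent F (Fin.snoc x e : Fin (n + 1) → A))
    (hspan : Submodule.span F (Set.range (Fin.snoc x e : Fin (n + 1) → A)) = ⊤)
    (hxx : ∀ i j, m (x i) (x j) = 0)
    (hee : m e e = e)
    (hfirst : m (x ⟨0, by omega⟩) e = e + x ⟨1, by omega⟩)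
    (hmid : ∀ (i : ℕ) (h1 : 1 ≤ i) (h2 : i + 1 < n),
      m (x ⟨i, by omega⟩) e = x ⟨i, by omega⟩ + x ⟨i + 1, h2⟩)
    (hlast : m (x ⟨n - 1, by omega⟩) e = x ⟨n - 1, by omega⟩ + x ⟨0, by omega⟩) :
    IsSimpleAlg F (fun u v : A => m u v) := by
  have : NeZero n := ⟨by omega⟩
  refine isSimpleAlg_of_mul_e_eq m x e hbasis hspan hxx hee fun ⟨i, hi⟩ => ?_
  have hsucc : (⟨i, hi⟩ + 1 : Fin n) = ⟨(i + 1) % n, Nat.mod_lt _ (by omega)⟩ :=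
    Fin.ext (by simp [Fin.val_add])
  rw [hsucc]
  rcases (by omega : i = 0 ∨ i = n - 1 ∨ (1 ≤ i ∧ i + 1 < n)) with rfl | rfl | ⟨h1, h2⟩
  · simpa [Nat.mod_eq_of_lt (by omega : 1 < n)] using hfirst
  · rw [if_neg (by simp [Fin.ext_iff]; omega)]
    simpa [Nat.sub_add_cancel (by omega : 1 ≤ n)] using hlast
  · rw [if_neg (by simp [Fin.ext_iff]; omega)]
    simpa [Nat.mod_eq_of_lt h2] using hmid i h1 h2
end

section
/- Let F be a field, n ≥ 2, and let A be a simple commutative (n+1)-dimensional algebra over F containing an n-dimensional linear subspace V with V·V = 0 (i.e. A is strongly degenerate). Then A is not isotopically simple: there exists a principal isotope of A that is not simple. Consequently, there exist simple finite-dimensional commutative algebras with a nonzero idempotent that are not isotopically simple. -/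
open Module

/-! Pick `e ∉ V`, so that `A = F e ⊕ V`. Since `V·V = 0`, every product `b·u` with `u ∈ V` is a
multiple of `e·u`, so `A·V = e·V =: U`. A vector of `V` annihilated by `e` therefore
annihilates all of `A`, so simplicity makes left multiplication by `e` injective on `V`, and `U` is a hyperplane too. For an automorphism `f` with `f(U) = V`, the
isotope `u ∗ v = f(u)·f(v)` has `A ∗ U ⊆ A·V = U`, so `U` is a proper nonzero ideal of it. -/

section Isotope

variable {F A : Type*} [Field F] [AddCommGroup A] [Module F A]

theorem isIdeal_of_comm {mul : A → A → A} (hcomm : ∀ u v, mul u v = mul v u)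
    {I : Submodule F A} (h : ∀ a, ∀ u ∈ I, mul a u ∈ I) : IsIdeal F mul I :=
  fun a u hu => ⟨h a u hu, hcomm u a ▸ h a u hu⟩

theorem not_isSimpleAlg_of_isIdeal {mul : A → A → A} {I : Submodule F A} (hI : IsIdeal F mul I)
    (hbot : I ≠ ⊥) (htop : I ≠ ⊤) : ¬ IsSimpleAlg F mul :=
  fun hs => (hs.2 I hI).elim hbot htop

variable {m : A →ₗ[F] A →ₗ[F] A}

theorem ker_flip_eq_bot_of_isSimpleAlg (hcomm : ∀ u v, m u v = m v u)
    (hs : IsSimpleAlg F (fun u v => m u v)) : LinearMap.ker m.flip = ⊥ := by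
  have hI : IsIdeal F (fun u v => m u v) (LinearMap.ker m.flip) :=
    isIdeal_of_comm hcomm fun a u hu => by
      have : m a u = 0 := by simpa using LinearMap.congr_fun (LinearMap.mem_ker.1 hu) a
      simp [this]
  refine (hs.2 _ hI).resolve_right fun htop => ?_
  obtain ⟨u, v, huv⟩ := hs.1
  rw [LinearMap.ker_eq_top] at htop
  exact huv (by simpa using LinearMap.congr_fun (LinearMap.congr_fun htop v) u)

theorem mul_mem_span_mul_of_sup_eq_top {V : Submodule F A} (hVV : ∀ u ∈ V, ∀ v ∈ V, m u v = 0)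
    {e : A} (he : V ⊔ F ∙ e = ⊤) {u : A} (hu : u ∈ V) (b : A) : m b u ∈ F ∙ m e u := by
  have : V ⊔ F ∙ e ≤ (F ∙ m e u).comap (m.flip u) :=
    sup_le (fun w hw => by simp [hVV w hw u hu])
      (Submodule.span_singleton_le_iff_mem _ _ |>.2 (Submodule.mem_span_singleton_self _))
  exact this (he ▸ Submodule.mem_top)

theorem disjoint_ker_of_sup_eq_top (hcomm : ∀ u v, m u v = m v u)
    (hs : IsSimpleAlg F (fun u v => m u v)) {V : Submodule F A}
    (hVV : ∀ u ∈ V, ∀ v ∈ V, m u v = 0) {e : A} (he : V ⊔ F ∙ e = ⊤) :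
    Disjoint V (LinearMap.ker (m e)) := by
  refine Submodule.disjoint_def.2 fun v hv hker => ?_
  have hflip : v ∈ LinearMap.ker m.flip := by
    refine LinearMap.mem_ker.2 (LinearMap.ext fun b => ?_)
    simpa [LinearMap.mem_ker.1 hker] using mul_mem_span_mul_of_sup_eq_top hVV he hv b
  rwa [ker_flip_eq_bot_of_isSimpleAlg hcomm hs] at hflip

theorem exists_isotope_not_isSimpleAlg [FiniteDimensional F A] (hcomm : ∀ u v, m u v = m v u)
    (hs : IsSimpleAlg F (fun u v => m u v)) {V : Submodule F A}
    (hVV : ∀ u ∈ V, ∀ v ∈ V, m u v = 0) (hVdim : finrank F V + 1 = finrank F A)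
    (hVbot : V ≠ ⊥) :
    ∃ f g : A ≃ₗ[F] A, ¬ IsSimpleAlg F (fun u v => m (f u) (g v)) := by
  obtain ⟨e, he⟩ := SetLike.exists_not_mem_of_ne_top V fun h => by
    rw [h, finrank_top] at hVdim
    omega
  have hsup : V ⊔ F ∙ e = ⊤ :=
    Submodule.eq_top_of_finrank_eq (by rw [Submodule.finrank_sup_span_singleton he, hVdim])
  set U := LinearMap.range ((m e).domRestrict V)
  let φ : V ≃ₗ[F] U := LinearEquiv.ofInjective _ <|
    LinearMap.injective_domRestrict_iff.2 (disjoint_ker_of_sup_eq_top hcomm hs hVV hsup)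
  obtain ⟨f, hf⟩ := Submodule.exists_linearEquiv_restrict_eq φ.symm
  have hfU : ∀ u ∈ U, f u ∈ V := fun u hu => hf ⟨u, hu⟩ ▸ (φ.symm ⟨u, hu⟩).2
  have hUdim : finrank F U = finrank F V := φ.finrank_eq.symm
  refine ⟨f, f, not_isSimpleAlg_of_isIdeal (I := U) ?_ ?_ ?_⟩
  · refine isIdeal_of_comm (fun u v => hcomm _ _) fun a u hu => ?_
    have hspan := mul_mem_span_mul_of_sup_eq_top hVV hsup (hfU u hu) (f a)
    refine Submodule.span_singleton_le_iff_mem _ _ |>.2 ?_ hspan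
    simpa [U] using Submodule.mem_map_of_mem (f := m e) (hfU u hu)
  · rwa [Ne, ← Submodule.finrank_eq_zero, hUdim, Submodule.finrank_eq_zero]
  · intro htop
    rw [htop, finrank_top] at hUdim
    omega

end Isotope

section Example

variable (F : Type*) [Field F]

/-- In the standard basis `e₀, e₁, e₂`: `e₀² = e₀`, `e₀e₁ = e₂`, `e₀e₂ = e₀ + e₁`, and all other
products of basis vectors vanish. -/
def exampleMul : (Fin 3 → F) →ₗ[F] (Fin 3 → F) →ₗ[F] (Fin 3 → F) :=
  LinearMap.mk₂ F
    (fun u v => ![u 0 * v 0 + u 0 * v 2 + u 2 * v 0,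
                  u 0 * v 2 + u 2 * v 0,
                  u 0 * v 1 + u 1 * v 0])
    (by intro u u' v; funext i; fin_cases i <;> simp <;> ring)
    (by intro c u v; funext i; fin_cases i <;> simp <;> ring)
    (by intro u v v'; funext i; fin_cases i <;> simp <;> ring)
    (by intro u c v; funext i; fin_cases i <;> simp <;> ring)

variable {F}

theorem exampleMul_apply (u v : Fin 3 → F) :
    exampleMul F u v = ![u 0 * v 0 + u 0 * v 2 + u 2 * v 0,
                         u 0 * v 2 + u 2 * v 0,
                         u 0 * v 1 + u 1 * v 0] := rfl

theorem exampleMul_comm (u v : Fin 3 → F) : exampleMul F u v = exampleMul F v u := by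
  funext i; fin_cases i <;> simp [exampleMul_apply] <;> ring

theorem exampleMul_idem : exampleMul F ![1, 0, 0] ![1, 0, 0] = ![1, 0, 0] := by
  funext i; fin_cases i <;> simp [exampleMul_apply]

theorem exampleMul_eq_zero_of_mem_ker {u v : Fin 3 → F}
    (hu : u ∈ LinearMap.ker (LinearMap.proj 0 : (Fin 3 → F) →ₗ[F] F))
    (hv : v ∈ LinearMap.ker (LinearMap.proj 0 : (Fin 3 → F) →ₗ[F] F)) :
    exampleMul F u v = 0 := by
  rw [LinearMap.mem_ker, LinearMap.proj_apply] at hu hv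
  funext i; fin_cases i <;> simp [exampleMul_apply, hu, hv]

variable {I : Submodule F (Fin 3 → F)}

theorem exampleMul_ideal_eq_top_of_idem_mem (hI : IsIdeal F (fun u v => exampleMul F u v) I)
    (h : ![1, 0, 0] ∈ I) : I = ⊤ := by
  refine Submodule.eq_top_iff'.2 fun y => ?_
  -- right multiplication by `e₀` is bijective
  have hy : exampleMul F ![y 0 - y 1, y 2, y 1] ![1, 0, 0] = y := by
    funext i; fin_cases i <;> simp [exampleMul_apply]
  exact hy ▸ (hI _ _ h).1

theorem exampleMul_ideal_eq_top_of_apply_zero_ne_zero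
    (hI : IsIdeal F (fun u v => exampleMul F u v) I) {w : Fin 3 → F} (hw : w ∈ I)
    (hw0 : w 0 ≠ 0) : I = ⊤ := by
  have hw' : exampleMul F ![1, 0, 0] (exampleMul F ![0, 0, 1] w) - exampleMul F ![0, 1, 0] w
      = w 0 • ![1, 0, 0] := by
    funext i; fin_cases i <;> simp [exampleMul_apply]
  have hmem := sub_mem (hI ![1, 0, 0] _ (hI ![0, 0, 1] w hw).1).1 (hI ![0, 1, 0] w hw).1
  rw [hw', Submodule.smul_mem_iff _ hw0] at hmem
  exact exampleMul_ideal_eq_top_of_idem_mem hI hmem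

theorem exampleMul_apply_zero_ne_zero_or {u : Fin 3 → F} (hu : u ≠ 0) :
    u 0 ≠ 0 ∨ exampleMul F ![1, 0, 0] u 0 ≠ 0 ∨
      exampleMul F ![1, 0, 0] (exampleMul F ![1, 0, 0] u) 0 ≠ 0 := by
  by_contra! h
  obtain ⟨h0, h2, h1⟩ := h
  simp [exampleMul_apply, h0] at h2
  simp [exampleMul_apply, h0, h2] at h1
  exact hu (by funext i; fin_cases i <;> simp [h0, h1, h2])

theorem isSimpleAlg_exampleMul : IsSimpleAlg F (fun u v => exampleMul F u v) := by
  refine ⟨⟨![1, 0, 0], ![1, 0, 0], by simp [exampleMul_idem]⟩, fun I hI => ?_⟩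
  refine or_iff_not_imp_left.2 fun hbot => ?_
  obtain ⟨u, hu, hu0⟩ := (Submodule.ne_bot_iff I).1 hbot
  have hLu := (hI ![1, 0, 0] u hu).1
  rcases exampleMul_apply_zero_ne_zero_or hu0 with h | h | h
  · exact exampleMul_ideal_eq_top_of_apply_zero_ne_zero hI hu h
  · exact exampleMul_ideal_eq_top_of_apply_zero_ne_zero hI hLu h
  · exact exampleMul_ideal_eq_top_of_apply_zero_ne_zero hI (hI _ _ hLu).1 h

end Example

/-- (a) Let `A` be a simple commutative `(n+1)`-dimensional
algebra (`n ≥ 2`) containing an `n`-dimensional subspace `V` with `V·V = 0`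
(a strongly degenerate algebra). Then `A` is not isotopically simple: some
principal isotope of `A` is not simple. (b) Consequently, there exist simple
finite-dimensional commutative algebras (e.g. 3-dimensional ones) with a nonzero
idempotent that are not isotopically simple. -/
theorem stmt19 :
    (∀ (F : Type) [Field F], ∀ n : ℕ, 2 ≤ n →
      ∀ (A : Type) [AddCommGroup A] [Module F A],
        Module.finrank F A = n + 1 →
        ∀ (m : A →ₗ[F] A →ₗ[F] A),
          (∀ u v : A, m u v = m v u) →
          IsSimpleAlg F (fun u v : A => m u v) →
          (∃ V : Submodule F A, Module.finrank F ↥V = n ∧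
            ∀ u ∈ V, ∀ v ∈ V, m u v = 0) →
          ∃ f g : A ≃ₗ[F] A,
            ¬ IsSimpleAlg F (fun u v : A => m (f u) (g v))) ∧
    (∀ (F : Type) [Field F],
      ∃ m : (Fin 3 → F) →ₗ[F] (Fin 3 → F) →ₗ[F] (Fin 3 → F),
        (∀ u v : Fin 3 → F, m u v = m v u) ∧
        IsSimpleAlg F (fun u v : Fin 3 → F => m u v) ∧
        (∃ u : Fin 3 → F, u ≠ 0 ∧ m u u = u) ∧
        ∃ f g : (Fin 3 → F) ≃ₗ[F] (Fin 3 → F),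
          ¬ IsSimpleAlg F (fun u v : Fin 3 → F => m (f u) (g v))) := by
  refine ⟨fun F _ n hn A _ _ hdim m hcomm hs ⟨V, hVdim, hVV⟩ => ?_, fun F _ => ?_⟩
  · have : FiniteDimensional F A := Module.finite_of_finrank_pos (by omega)
    refine exists_isotope_not_isSimpleAlg hcomm hs hVV (by omega) fun hV => ?_
    rw [hV, finrank_bot] at hVdim
    omega
  · have he₀ : (![1, 0, 0] : Fin 3 → F) ≠ 0 := fun h => by simpa using congrFun h 0
    have hproj : (LinearMap.proj 0 : Module.Dual F (Fin 3 → F)) ≠ 0 := fun h => he₀ <| by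
      simpa using LinearMap.congr_fun h ![1, 0, 0]
    refine ⟨exampleMul F, exampleMul_comm, isSimpleAlg_exampleMul, ⟨_, he₀, exampleMul_idem⟩, ?_⟩
    refine exists_isotope_not_isSimpleAlg exampleMul_comm isSimpleAlg_exampleMul
      (fun u hu v hv => exampleMul_eq_zero_of_mem_ker hu hv)
      (Module.Dual.finrank_ker_add_one_of_ne_zero hproj)
      ((Submodule.ne_bot_iff _).2 ⟨![0, 1, 0], by simp, fun h => by simpa using congrFun h 1⟩)
end
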